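/- If (a_i) is the Zeckendorf representation of n and (b_i) is the Chung-Graham representation of n, then ∑ a_i F_{i+2} = ∑ b_i F_{i+2} = n; furthermore, the map sending the Zeckendorf representation of n to the Chung-Graham representation of n is a bijection between the set of valid Zeckendorf strings and the set of valid Chung-Graham strings. -/

import Mathlib

/-- The value represented by a finitely supported digit sequence:
    `∑ i, a i * F (i+2)` where `F` is the Fibonacci sequence. -/
def fibVal (a : ℕ →₀ ℕ) : ℕ := a.sum fun i c => c * Nat.fib (i + 2)

/-- Zeckendorf conditions: binary digits with no two consecutive 1's. -/
def IsZeckendorf (a : ℕ →₀ ℕ) : Prop :=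
  (∀ i, a i ≤ 1) ∧ (∀ i, a i * a (i + 1) = 0)

/-- Chung-Graham conditions: digits in {0,1,2}, zero at odd indices, and
    between any two even indices carrying digit 2 there is an even index
    carrying digit 0. -/
def IsChungGraham (a : ℕ →₀ ℕ) : Prop :=
  (∀ i, a i ≤ 2) ∧ (∀ i, Odd i → a i = 0) ∧
  (∀ i j, Even i → Even j → i < j → a i = 2 → a j = 2 →
    ∃ k, Even k ∧ i < k ∧ k < j ∧ a k = 0)

/-- The `cgsplit` rule: digit 0 ↦ (0,0), 1 ↦ (0,1), 2 ↦ (1,1). -/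
def IsSplit (a b c : ℕ →₀ ℕ) : Prop :=
  ∀ i, (a i = 0 → b i = 0 ∧ c i = 0) ∧
       (a i = 1 → b i = 0 ∧ c i = 1) ∧
       (a i = 2 → b i = 1 ∧ c i = 1)


/-!
Let `Z k` be the Zeckendorf strings supported below position `k` and `C k` the Chung–Graham
strings supported below position `2 * k`. Splitting off the top digit, `Z (k + 1)` is `Z k` together
with a `1` on top of `Z (k - 1)`, so by induction `fibVal` maps `Z k` bijectively onto
`[0, F (k + 2))`. Likewise `C (k + 1)` consists of `C k` with a top digit `0` or `1`, and of the
strings of `C k` in which every `2` is followed by a `0`, with a top digit `2`; tracking the latter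
family `D k` as well, `fibVal` maps `C k` onto `[0, F (2k + 2))` and `D k` onto `[0, F (2k + 1))`,
because `F (2k + 4) = 2 F (2k + 2) + F (2k + 1)` and `F (2k + 3) = F (2k + 2) + F (2k + 1)`.
Letting `k` grow, `fibVal` is a bijection from either kind of string onto `ℕ`.
-/

open Set

lemma fibVal_zero : fibVal 0 = 0 := Finsupp.sum_zero_index

lemma fibVal_add (a b : ℕ →₀ ℕ) : fibVal (a + b) = fibVal a + fibVal b :=
  Finsupp.sum_add_index' (fun _ => zero_mul _) fun _ _ _ => add_mul _ _ _

lemma fibVal_single (i d : ℕ) : fibVal (Finsupp.single i d) = d * Nat.fib (i + 2) :=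
  Finsupp.sum_single_index (zero_mul _)

lemma fibVal_eq_add_fibVal_erase (b : ℕ →₀ ℕ) (i : ℕ) :
    fibVal b = b i * Nat.fib (i + 2) + fibVal (b.erase i) := by
  conv_lhs => rw [← Finsupp.single_add_erase i b]
  rw [fibVal_add, fibVal_single]

lemma Finsupp.exists_forall_ge_apply_eq_zero (a : ℕ →₀ ℕ) : ∃ k, ∀ i, k ≤ i → a i = 0 := by
  obtain ⟨k, hk⟩ := a.support.exists_nat_subset_range
  exact ⟨k, fun i hi => Finsupp.notMem_support_iff.1 fun h =>
    (Finset.mem_range.1 (hk h)).not_ge hi⟩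

lemma Set.BijOn.union_Iio_Ico {α β : Type*} [LinearOrder β] {f : α → β} {s t : Set α}
    {a b : β} (hs : BijOn f s (Iio a)) (ht : BijOn f t (Ico a b)) (hab : a ≤ b) :
    BijOn f (s ∪ t) (Iio b) := by
  have hne : ∀ x ∈ s, ∀ y ∈ t, f x ≠ f y := fun x hx y hy =>
    ((hs.mapsTo hx).trans_le (ht.mapsTo hy).1).ne
  rw [← Iio_union_Ico_eq_Iio hab]
  exact hs.union ht ((injOn_union (disjoint_left.2 fun x hx hx' => hne x hx x hx' rfl)).2
    ⟨hs.injOn, ht.injOn, hne⟩)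

lemma Set.bijOn_iUnion_univ_of_monotone {α : Type*} {f : α → ℕ} {S : ℕ → Set α} {N : ℕ → ℕ}
    (hS : Monotone S) (hN : ∀ n, ∃ k, n < N k) (h : ∀ k, BijOn f (S k) (Iio (N k))) :
    BijOn f (⋃ k, S k) univ := by
  have := bijOn_iUnion_of_directed hS.directed_le h
  rwa [(iUnion_eq_univ_iff (f := fun k => Iio (N k))).2 hN] at this

lemma bijOn_fibVal_zero : BijOn fibVal {0} (Iio 1) := by
  rw [Order.Iio_one]
  exact bijOn_singleton.2 fibVal_zero

def withDigit (i d : ℕ) (S : Set (ℕ →₀ ℕ)) : Set (ℕ →₀ ℕ) := {b | b i = d ∧ b.erase i ∈ S}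

lemma bijOn_withDigit {S : Set (ℕ →₀ ℕ)} {i N : ℕ} (d : ℕ) (hS : BijOn fibVal S (Iio N))
    (hi : ∀ c ∈ S, c i = 0) :
    BijOn fibVal (withDigit i d S) (Ico (d * Nat.fib (i + 2)) (d * Nat.fib (i + 2) + N)) := by
  refine ⟨?_, ?_, ?_⟩
  · rintro b ⟨hbi, hb⟩
    have : fibVal (b.erase i) < N := hS.mapsTo hb
    rw [mem_Ico, fibVal_eq_add_fibVal_erase b i, hbi]
    omega
  · rintro b ⟨hbi, hb⟩ b' ⟨hbi', hb'⟩ h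
    rw [fibVal_eq_add_fibVal_erase b i, fibVal_eq_add_fibVal_erase b' i, hbi, hbi'] at h
    have := hS.injOn hb hb' (by omega)
    rw [← Finsupp.single_add_erase i b, ← Finsupp.single_add_erase i b', hbi, hbi', this]
  · rintro n ⟨hn₁, hn₂⟩
    obtain ⟨c, hc, hcn⟩ := hS.surjOn (show n - d * Nat.fib (i + 2) ∈ Iio N by
      rw [mem_Iio]; omega)
    have hci : c.erase i = c := Finsupp.erase_of_notMem_support (by simpa using hi c hc)
    refine ⟨Finsupp.single i d + c, ⟨by simp [hi c hc], ?_⟩, ?_⟩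
    · rwa [Finsupp.erase_add, Finsupp.erase_single, zero_add, hci]
    · rw [fibVal_add, fibVal_single, hcn]
      omega

def zeckendorfBelow (k : ℕ) : Set (ℕ →₀ ℕ) := {a | IsZeckendorf a ∧ ∀ i, k ≤ i → a i = 0}

lemma zeckendorfBelow_mono : Monotone zeckendorfBelow :=
  fun _ _ hk _ ha => ⟨ha.1, fun i hi => ha.2 i (hk.trans hi)⟩

lemma iUnion_zeckendorfBelow : ⋃ k, zeckendorfBelow k = {a | IsZeckendorf a} := by
  ext a
  refine ⟨fun h => (mem_iUnion.1 h).choose_spec.1, fun ha => ?_⟩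
  obtain ⟨k, hk⟩ := a.exists_forall_ge_apply_eq_zero
  exact mem_iUnion.2 ⟨k, ha, hk⟩

lemma zeckendorfBelow_zero : zeckendorfBelow 0 = {0} := by
  ext a
  refine ⟨fun ha => Finsupp.ext fun i => ha.2 i (Nat.zero_le i), ?_⟩
  rintro rfl
  exact ⟨⟨fun _ => Nat.zero_le _, fun _ => zero_mul _⟩, fun _ _ => rfl⟩

-- At `k = 0` the truncated `k - 1 = 0` is what we want: the erased string must vanish.
lemma zeckendorfBelow_succ (k : ℕ) :
    zeckendorfBelow (k + 1) = zeckendorfBelow k ∪ withDigit k 1 (zeckendorfBelow (k - 1)) := by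
  ext b
  simp only [zeckendorfBelow, withDigit, IsZeckendorf, mem_union, mem_ofPred_eq,
    Finsupp.erase_apply]
  grind

theorem bijOn_zeckendorfBelow :
    ∀ k, BijOn fibVal (zeckendorfBelow k) (Iio (Nat.fib (k + 2)))
  | 0 => by
    rw [zeckendorfBelow_zero]
    exact bijOn_fibVal_zero
  | k + 1 => by
    have htop :=
      bijOn_withDigit 1 (bijOn_zeckendorfBelow (k - 1)) fun c hc => hc.2 k (Nat.sub_le k 1)
    rw [one_mul, show Nat.fib (k - 1 + 2) = Nat.fib (k + 1) by cases k <;> rfl] at htop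
    rw [zeckendorfBelow_succ, show Nat.fib (k + 1 + 2) = Nat.fib (k + 2) + Nat.fib (k + 1) from
      Nat.fib_add_two.trans (add_comm _ _)]
    exact (bijOn_zeckendorfBelow k).union_Iio_Ico htop (Nat.le_add_right _ _)

theorem bijOn_fibVal_isZeckendorf : BijOn fibVal {a | IsZeckendorf a} univ := by
  rw [← iUnion_zeckendorfBelow]
  refine bijOn_iUnion_univ_of_monotone zeckendorfBelow_mono (fun n => ⟨n, ?_⟩)
    bijOn_zeckendorfBelow
  have := Nat.le_fib_add_one (n + 2)
  omega

def chungGrahamBelow (k : ℕ) : Set (ℕ →₀ ℕ) :=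
  {b | IsChungGraham b ∧ ∀ i, 2 * k ≤ i → b i = 0}

def TwosGuardedBelow (b : ℕ →₀ ℕ) (m : ℕ) : Prop :=
  ∀ j, b j = 2 → ∃ l, Even l ∧ j < l ∧ l < m ∧ b l = 0

-- Exactly the strings in `chungGrahamBelow k` that stay Chung-Graham with a `2` put at `2 * k`.
def chungGrahamGuardedBelow (k : ℕ) : Set (ℕ →₀ ℕ) :=
  {b ∈ chungGrahamBelow k | TwosGuardedBelow b (2 * k)}

lemma IsChungGraham.erase {b : ℕ →₀ ℕ} (hb : IsChungGraham b) (i : ℕ) :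
    IsChungGraham (b.erase i) := by
  obtain ⟨hle, hodd, hpair⟩ := hb
  refine ⟨fun j => ?_, fun j hj => ?_, fun p q hp hq hpq hp2 hq2 => ?_⟩ <;>
    simp only [Finsupp.erase_apply] at *
  · split_ifs <;> grind
  · split_ifs <;> grind
  · grind

section TopDigit

variable {b : ℕ →₀ ℕ} {k : ℕ}

lemma chungGrahamBelow_mono : Monotone chungGrahamBelow :=
  fun _ _ hk _ hb => ⟨hb.1, fun i hi => hb.2 i (by omega)⟩

lemma even_and_lt_of_mem_chungGrahamBelow (hb : b ∈ chungGrahamBelow k) {j : ℕ}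
    (hj : b j ≠ 0) : Even j ∧ j < 2 * k :=
  ⟨by_contra fun h => hj (hb.1.2.1 j (Nat.not_even_iff_odd.1 h)),
    by_contra fun h => hj (hb.2 j (by omega))⟩

lemma erase_mem_chungGrahamBelow (hb : b ∈ chungGrahamBelow (k + 1)) :
    b.erase (2 * k) ∈ chungGrahamBelow k := by
  refine ⟨hb.1.erase _, fun i hi => ?_⟩
  obtain rfl | hik := eq_or_ne i (2 * k)
  · exact Finsupp.erase_same
  · rw [Finsupp.erase_ne hik]
    by_contra h
    have := even_and_lt_of_mem_chungGrahamBelow hb h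
    grind

lemma mem_chungGrahamBelow_of_apply_eq_zero (hb : b ∈ chungGrahamBelow (k + 1))
    (h0 : b (2 * k) = 0) : b ∈ chungGrahamBelow k := by
  refine ⟨hb.1, fun i hi => ?_⟩
  obtain rfl | hik := eq_or_ne i (2 * k)
  · exact h0
  · rw [← Finsupp.erase_ne hik]
    exact (erase_mem_chungGrahamBelow hb).2 i hi

lemma twosGuardedBelow_erase (hb : b ∈ chungGrahamBelow (k + 1)) (h2 : b (2 * k) = 2) :
    TwosGuardedBelow (b.erase (2 * k)) (2 * k) := by
  intro j hj
  rw [Finsupp.erase_apply] at hj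
  split_ifs at hj with hjk
  obtain ⟨hj_even, hjk'⟩ := even_and_lt_of_mem_chungGrahamBelow hb (j := j) (by omega)
  obtain ⟨l, hl, hjl, hlk, hl0⟩ :=
    hb.1.2.2 j (2 * k) hj_even (even_two_mul k) (by grind) hj h2
  exact ⟨l, hl, hjl, hlk, by rwa [Finsupp.erase_ne hlk.ne]⟩

lemma mem_chungGrahamBelow_succ_of_erase (hc : b.erase (2 * k) ∈ chungGrahamBelow k)
    (hle : b (2 * k) ≤ 2) (h2 : b (2 * k) = 2 → TwosGuardedBelow (b.erase (2 * k)) (2 * k)) :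
    b ∈ chungGrahamBelow (k + 1) := by
  have hb : ∀ i, i ≠ 2 * k → b i = b.erase (2 * k) i := fun i hi => (Finsupp.erase_ne hi).symm
  refine ⟨⟨fun i => ?_, fun i hi => ?_, fun i j hi hj hij hi2 hj2 => ?_⟩, fun i hi => ?_⟩
  · obtain rfl | hik := eq_or_ne i (2 * k)
    · exact hle
    · exact hb i hik ▸ hc.1.1 i
  · have : i ≠ 2 * k := by rintro rfl; exact Nat.not_odd_iff_even.2 (even_two_mul k) hi
    exact hb i this ▸ hc.1.2.1 i hi
  · obtain rfl | hjk := eq_or_ne j (2 * k)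
    · obtain ⟨l, hl, hil, hlj, hl0⟩ := h2 hj2 i ((hb i hij.ne).symm.trans hi2)
      exact ⟨l, hl, hil, hlj, (hb l hlj.ne).trans hl0⟩
    · have hj2' : b.erase (2 * k) j = 2 := (hb j hjk).symm.trans hj2
      have hjk' := (even_and_lt_of_mem_chungGrahamBelow hc (j := j) (by omega)).2
      obtain ⟨l, hl, hil, hlj, hl0⟩ :=
        hc.1.2.2 i j hi hj hij ((hb i (by omega)).symm.trans hi2) hj2'
      exact ⟨l, hl, hil, hlj, (hb l (by omega)).trans hl0⟩
  · rw [hb i (by omega)]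
    exact hc.2 i (by omega)

end TopDigit

lemma chungGrahamBelow_succ (k : ℕ) : chungGrahamBelow (k + 1) =
    chungGrahamBelow k ∪ withDigit (2 * k) 1 (chungGrahamBelow k) ∪
      withDigit (2 * k) 2 (chungGrahamGuardedBelow k) := by
  ext b
  constructor
  · intro hb
    have hc := erase_mem_chungGrahamBelow hb
    obtain h | h | h : b (2 * k) = 0 ∨ b (2 * k) = 1 ∨ b (2 * k) = 2 := by
      have := hb.1.1 (2 * k); omega
    · exact Or.inl (Or.inl (mem_chungGrahamBelow_of_apply_eq_zero hb h))
    · exact Or.inl (Or.inr ⟨h, hc⟩)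
    · exact Or.inr ⟨h, hc, twosGuardedBelow_erase hb h⟩
  · rintro ((hb | ⟨h1, hc⟩) | ⟨h2, hc, hg⟩)
    · exact chungGrahamBelow_mono k.le_succ hb
    · exact mem_chungGrahamBelow_succ_of_erase hc (by omega) (by omega)
    · exact mem_chungGrahamBelow_succ_of_erase hc (by omega) fun _ => hg

lemma chungGrahamGuardedBelow_succ (k : ℕ) : chungGrahamGuardedBelow (k + 1) =
    chungGrahamBelow k ∪ withDigit (2 * k) 1 (chungGrahamGuardedBelow k) := by
  ext b
  constructor
  · rintro ⟨hb, hg⟩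
    obtain h | h | h : b (2 * k) = 0 ∨ b (2 * k) = 1 ∨ b (2 * k) = 2 := by
      have := hb.1.1 (2 * k); omega
    · exact Or.inl (mem_chungGrahamBelow_of_apply_eq_zero hb h)
    · refine Or.inr ⟨h, erase_mem_chungGrahamBelow hb, fun j hj => ?_⟩
      have hjk : j ≠ 2 * k := by rintro rfl; simp at hj
      rw [Finsupp.erase_ne hjk] at hj
      obtain ⟨l, hl, hjl, hlk, hl0⟩ := hg j hj
      have hlk' : l ≠ 2 * k := by rintro rfl; omega
      exact ⟨l, hl, hjl, by grind, by rwa [Finsupp.erase_ne hlk']⟩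
    · obtain ⟨l, hl, hjl, hlk, -⟩ := hg _ h
      grind
  · rintro (hb | ⟨h1, hc, hg⟩)
    · refine ⟨chungGrahamBelow_mono k.le_succ hb,
        fun j hj => ⟨2 * k, even_two_mul k, ?_, by omega, hb.2 _ le_rfl⟩⟩
      exact (even_and_lt_of_mem_chungGrahamBelow hb (j := j) (by omega)).2
    · refine ⟨mem_chungGrahamBelow_succ_of_erase hc (by omega) (by omega), fun j hj => ?_⟩
      have hjk : j ≠ 2 * k := by rintro rfl; omega
      obtain ⟨l, hl, hjl, hlk, hl0⟩ := hg j (by rwa [Finsupp.erase_ne hjk])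
      exact ⟨l, hl, hjl, by omega, by rwa [Finsupp.erase_ne hlk.ne] at hl0⟩

lemma chungGrahamBelow_zero : chungGrahamBelow 0 = {0} := by
  ext b
  refine ⟨fun hb => Finsupp.ext fun i => hb.2 i (Nat.zero_le i), ?_⟩
  rintro rfl
  exact ⟨⟨fun _ => Nat.zero_le _, fun _ _ => rfl, fun _ _ _ _ _ h => by simp at h⟩, fun _ _ => rfl⟩

lemma chungGrahamGuardedBelow_zero : chungGrahamGuardedBelow 0 = {0} := by
  refine Subset.antisymm (fun b hb => chungGrahamBelow_zero ▸ hb.1)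
    (singleton_subset_iff.2 ⟨chungGrahamBelow_zero ▸ rfl, fun j hj => ?_⟩)
  simp at hj

theorem bijOn_chungGrahamBelow : ∀ k,
    BijOn fibVal (chungGrahamBelow k) (Iio (Nat.fib (2 * k + 2))) ∧
      BijOn fibVal (chungGrahamGuardedBelow k) (Iio (Nat.fib (2 * k + 1)))
  | 0 => by
    rw [chungGrahamBelow_zero, chungGrahamGuardedBelow_zero]
    exact ⟨bijOn_fibVal_zero, bijOn_fibVal_zero⟩
  | k + 1 => by
    obtain ⟨hb, hg⟩ := bijOn_chungGrahamBelow k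
    have hvan : ∀ c ∈ chungGrahamGuardedBelow k, c (2 * k) = 0 := fun c hc => hc.1.2 _ le_rfl
    have hb1 := bijOn_withDigit 1 hb fun c hc => hc.2 _ le_rfl
    have hg1 := bijOn_withDigit 1 hg hvan
    have hg2 := bijOn_withDigit 2 hg hvan
    rw [one_mul] at hb1 hg1
    rw [← two_mul] at hb1
    have hodd : Nat.fib (2 * (k + 1) + 1) = Nat.fib (2 * k + 2) + Nat.fib (2 * k + 1) := by
      rw [show 2 * (k + 1) + 1 = 2 * k + 1 + 2 by ring, Nat.fib_add_two, add_comm]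
    have heven : Nat.fib (2 * (k + 1) + 2) = 2 * Nat.fib (2 * k + 2) + Nat.fib (2 * k + 1) := by
      rw [show 2 * (k + 1) + 2 = 2 * k + 2 + 2 by ring, Nat.fib_add_two (n := 2 * k + 2),
        show 2 * k + 2 + 1 = 2 * (k + 1) + 1 by ring, hodd]
      ring
    rw [chungGrahamBelow_succ, chungGrahamGuardedBelow_succ, hodd, heven]
    exact ⟨(hb.union_Iio_Ico hb1 (by omega)).union_Iio_Ico hg2 (by omega),
      hb.union_Iio_Ico hg1 (by omega)⟩

lemma iUnion_chungGrahamBelow : ⋃ k, chungGrahamBelow k = {b | IsChungGraham b} := by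
  ext b
  refine ⟨fun h => (mem_iUnion.1 h).choose_spec.1, fun hb => ?_⟩
  obtain ⟨k, hk⟩ := b.exists_forall_ge_apply_eq_zero
  exact mem_iUnion.2 ⟨k, hb, fun i hi => hk i (by omega)⟩

theorem bijOn_fibVal_isChungGraham : BijOn fibVal {b | IsChungGraham b} univ := by
  rw [← iUnion_chungGrahamBelow]
  refine bijOn_iUnion_univ_of_monotone chungGrahamBelow_mono (fun n => ⟨n, ?_⟩)
    fun k => (bijOn_chungGrahamBelow k).1
  have := Nat.le_fib_add_one (n + 2)
  have := Nat.fib_mono (show n + 2 ≤ 2 * n + 2 by omega)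
  omega

theorem zeckendorf_chung_graham_bijection :
    (∀ n : ℕ, ∀ a b : ℕ →₀ ℕ,
      IsZeckendorf a → fibVal a = n → IsChungGraham b → fibVal b = n →
      fibVal a = fibVal b) ∧
    (∃ f : {a : ℕ →₀ ℕ // IsZeckendorf a} ≃ {b : ℕ →₀ ℕ // IsChungGraham b},
      ∀ a, fibVal (f a).1 = fibVal a.1) := by
  refine ⟨fun n a b _ ha _ hb => ha.trans hb.symm, ?_⟩
  let eZ := bijOn_fibVal_isZeckendorf.equiv fibVal
  let eC := bijOn_fibVal_isChungGraham.equiv fibVal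
  exact ⟨eZ.trans eC.symm, fun a => congrArg Subtype.val (eC.apply_symm_apply (eZ a))⟩
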